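/- arXiv:math/0308184 — 6 statements merged into one kernel-verified Lean document; each statement's English description precedes it below -/
import Mathlib

section
/- Let Γ be a finitely generated group of polynomial growth, and let B_Γ = {f : Γ → ℂ | for all L ∈ ℕ, sup_γ (1+‖γ‖)^L |f(γ)| < ∞} be the space of rapidly decreasing functions. Then B_Γ is closed under the convolution product (f * g)(γ) = Σ_{αβ = γ} f(α) g(β); in particular B_Γ is a ℂ-algebra under convolution. -/
open scoped BigOperators

/-- Summability of the base series `∑ 1/(1+l α)^(N+2)` under polynomial growth. -/
private lemma aux_summable_rd {Γ : Type*} (l : Γ → ℝ) (hl0 : ∀ γ, 0 ≤ l γ)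
    (C : ℝ) (hC : 0 < C) (N : ℕ)
    (hfin : ∀ R : ℝ, 0 ≤ R → {γ : Γ | l γ ≤ R}.Finite)
    (hgrowth : ∀ R : ℝ, 0 ≤ R → (Nat.card {γ : Γ | l γ ≤ R} : ℝ) ≤ C * (1 + R) ^ N) :
    Summable (fun α : Γ => ((1 + l α) ^ (N + 2))⁻¹) := by
  have hpos : ∀ α : Γ, (0:ℝ) < 1 + l α := fun α => by have := hl0 α; linarith
  have hsq : Summable (fun n : ℕ => ((1 + (n:ℝ)) ^ 2)⁻¹) := by
    have h1 : Summable (fun n : ℕ => 1 / (n:ℝ) ^ 2) :=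
      Real.summable_one_div_nat_pow.mpr (by norm_num)
    have h2 := (summable_nat_add_iff 1).mpr h1
    refine h2.congr fun n => ?_
    push_cast
    rw [one_div, add_comm (n:ℝ) 1]
  set S : ℝ := ∑' n : ℕ, ((1 + (n:ℝ)) ^ 2)⁻¹ with hS
  refine summable_of_sum_le (fun α => inv_nonneg.mpr (pow_nonneg (hpos α).le _)) (c := C * 2 ^ N * S) fun u => ?_
  classical
  have hmaps : ∀ α ∈ u, (⌊l α⌋₊ : ℕ) ∈ u.image (fun α => ⌊l α⌋₊) :=
    fun α hα => Finset.mem_image_of_mem _ hα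
  rw [← Finset.sum_fiberwise_of_maps_to hmaps]
  have hfiber : ∀ n ∈ u.image (fun α => ⌊l α⌋₊),
      ∑ α ∈ u.filter (fun α => ⌊l α⌋₊ = n), ((1 + l α) ^ (N + 2))⁻¹
        ≤ C * 2 ^ N * ((1 + (n:ℝ)) ^ 2)⁻¹ := by
    intro n _
    have hcardsub : (u.filter (fun α => ⌊l α⌋₊ = n)) ⊆
        (hfin ((n:ℝ) + 1) (by positivity)).toFinset := by
      intro α hα
      rw [Finset.mem_filter] at hα
      rw [Set.Finite.mem_toFinset]
      have : l α < ⌊l α⌋₊ + 1 := Nat.lt_floor_add_one _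
      rw [hα.2] at this
      exact le_of_lt this
    have hcard : ((u.filter (fun α => ⌊l α⌋₊ = n)).card : ℝ) ≤ C * 2 ^ N * (1 + (n:ℝ)) ^ N := by
      have h1 : ((u.filter (fun α => ⌊l α⌋₊ = n)).card : ℝ)
          ≤ ((hfin ((n:ℝ) + 1) (by positivity)).toFinset.card : ℝ) := by
        exact_mod_cast Finset.card_le_card hcardsub
      have h2 : ((hfin ((n:ℝ) + 1) (by positivity)).toFinset.card : ℝ)
          = (Nat.card {γ : Γ | l γ ≤ (n:ℝ) + 1} : ℝ) := by
        congr 1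
        rw [Nat.card_coe_set_eq,
          Set.ncard_eq_toFinset_card _ (hfin ((n:ℝ) + 1) (by positivity))]
      have h3 := hgrowth ((n:ℝ) + 1) (by positivity)
      have h4 : (1 + ((n:ℝ) + 1)) ^ N ≤ 2 ^ N * (1 + (n:ℝ)) ^ N := by
        rw [← mul_pow]
        apply pow_le_pow_left₀ (by positivity)
        push_cast; linarith
      calc ((u.filter (fun α => ⌊l α⌋₊ = n)).card : ℝ)
          ≤ (Nat.card {γ : Γ | l γ ≤ (n:ℝ) + 1} : ℝ) := by rw [← h2]; exact h1
        _ ≤ C * (1 + ((n:ℝ) + 1)) ^ N := h3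
        _ ≤ C * (2 ^ N * (1 + (n:ℝ)) ^ N) := by
            exact mul_le_mul_of_nonneg_left h4 hC.le
        _ = C * 2 ^ N * (1 + (n:ℝ)) ^ N := by ring
    have hterm : ∀ α ∈ u.filter (fun α => ⌊l α⌋₊ = n),
        ((1 + l α) ^ (N + 2))⁻¹ ≤ ((1 + (n:ℝ)) ^ (N + 2))⁻¹ := by
      intro α hα
      rw [Finset.mem_filter] at hα
      have hfl : (n:ℝ) ≤ l α := by
        rw [← hα.2]; exact Nat.floor_le (hl0 α)
      have hple : (1 + (n:ℝ)) ^ (N + 2) ≤ (1 + l α) ^ (N + 2) :=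
        pow_le_pow_left₀ (by positivity) (by linarith) _
      exact inv_anti₀ (by positivity) hple
    calc ∑ α ∈ u.filter (fun α => ⌊l α⌋₊ = n), ((1 + l α) ^ (N + 2))⁻¹
        ≤ (u.filter (fun α => ⌊l α⌋₊ = n)).card • ((1 + (n:ℝ)) ^ (N + 2))⁻¹ :=
          Finset.sum_le_card_nsmul _ _ _ hterm
      _ = ((u.filter (fun α => ⌊l α⌋₊ = n)).card : ℝ) * ((1 + (n:ℝ)) ^ (N + 2))⁻¹ := by
          rw [nsmul_eq_mul]
      _ ≤ (C * 2 ^ N * (1 + (n:ℝ)) ^ N) * ((1 + (n:ℝ)) ^ (N + 2))⁻¹ := by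
          apply mul_le_mul_of_nonneg_right hcard (by positivity)
      _ = C * 2 ^ N * ((1 + (n:ℝ)) ^ 2)⁻¹ := by
          rw [pow_add]
          field_simp
  calc ∑ n ∈ u.image (fun α => ⌊l α⌋₊),
        ∑ α ∈ u.filter (fun α => ⌊l α⌋₊ = n), ((1 + l α) ^ (N + 2))⁻¹
      ≤ ∑ n ∈ u.image (fun α => ⌊l α⌋₊), C * 2 ^ N * ((1 + (n:ℝ)) ^ 2)⁻¹ :=
        Finset.sum_le_sum hfiber
    _ = C * 2 ^ N * ∑ n ∈ u.image (fun α => ⌊l α⌋₊), ((1 + (n:ℝ)) ^ 2)⁻¹ := by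
        rw [Finset.mul_sum]
    _ ≤ C * 2 ^ N * S := by
        apply mul_le_mul_of_nonneg_left _ (by positivity)
        exact Summable.sum_le_tsum _ (fun n _ => by positivity) hsq

/-- For a finitely generated group `Γ` of polynomial growth, the space
`B_Γ = {f : Γ → ℂ | ∀ L, sup_γ (1+‖γ‖)^L |f(γ)| < ∞}` of rapidly decreasing functions is
closed under the convolution product `(f * g)(γ) = Σ_{αβ = γ} f(α) g(β)`: all the
convolution series converge (absolutely) and the convolution is again rapidly decreasing. -/
theorem rapid_decay_algebra_closed_under_convolution {Γ : Type*} [Group Γ]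
    (l : Γ → ℝ) (hl0 : ∀ γ, 0 ≤ l γ) (hl1 : l 1 = 0)
    (hsub : ∀ γ γ', l (γ * γ') ≤ l γ + l γ')
    (hsymm : ∀ γ, l γ⁻¹ = l γ)
    (C : ℝ) (hC : 0 < C) (N : ℕ)
    (hfin : ∀ R : ℝ, 0 ≤ R → {γ : Γ | l γ ≤ R}.Finite)
    (hgrowth : ∀ R : ℝ, 0 ≤ R → (Nat.card {γ : Γ | l γ ≤ R} : ℝ) ≤ C * (1 + R) ^ N)
    (f g : Γ → ℂ)
    (hf : ∀ L : ℕ, ∃ M : ℝ, ∀ γ, (1 + l γ) ^ L * ‖f γ‖ ≤ M)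
    (hg : ∀ L : ℕ, ∃ M : ℝ, ∀ γ, (1 + l γ) ^ L * ‖g γ‖ ≤ M) :
    (∀ γ : Γ, Summable fun α : Γ => f α * g (α⁻¹ * γ)) ∧
    (∀ L : ℕ, ∃ M : ℝ, ∀ γ : Γ,
      (1 + l γ) ^ L * ‖∑' α : Γ, f α * g (α⁻¹ * γ)‖ ≤ M) := by
  have hpos : ∀ α : Γ, (0:ℝ) < 1 + l α := fun α => by have := hl0 α; linarith
  have hS : Summable (fun α : Γ => ((1 + l α) ^ (N + 2))⁻¹) :=
    aux_summable_rd l hl0 C hC N hfin hgrowth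
  -- pointwise bound on each summand, with weight `L`
  have key : ∀ (L : ℕ) (M1 M2 : ℝ), (∀ γ, (1 + l γ) ^ (L + (N + 2)) * ‖f γ‖ ≤ M1) →
      (∀ γ, (1 + l γ) ^ L * ‖g γ‖ ≤ M2) → ∀ (γ α : Γ),
      (1 + l γ) ^ L * ‖f α * g (α⁻¹ * γ)‖ ≤ M1 * M2 * ((1 + l α) ^ (N + 2))⁻¹ := by
    intro L M1 M2 hM1 hM2 γ α
    set β := α⁻¹ * γ with hβ
    have hγ : γ = α * β := by rw [hβ]; group
    have hlen : 1 + l γ ≤ (1 + l α) * (1 + l β) := by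
      have h1 : l γ ≤ l α + l β := by rw [hγ]; exact hsub α β
      have h2 := hl0 α; have h3 := hl0 β
      nlinarith
    have hgnn : 0 ≤ (1 + l β) ^ L * ‖g β‖ := mul_nonneg (pow_nonneg (hpos β).le _) (norm_nonneg _)
    have hfnn : 0 ≤ (1 + l α) ^ (L + (N + 2)) * ‖f α‖ := mul_nonneg (pow_nonneg (hpos α).le _) (norm_nonneg _)
    have hfL : (1 + l α) ^ L * ‖f α‖ ≤ M1 * ((1 + l α) ^ (N + 2))⁻¹ := by
      have h := hM1 α
      have hinv : (0:ℝ) < (1 + l α) ^ (N + 2) := pow_pos (hpos α) _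
      rw [pow_add] at h
      calc (1 + l α) ^ L * ‖f α‖
          = ((1 + l α) ^ L * (1 + l α) ^ (N + 2) * ‖f α‖) * ((1 + l α) ^ (N + 2))⁻¹ := by
            field_simp
        _ ≤ M1 * ((1 + l α) ^ (N + 2))⁻¹ := by
            exact mul_le_mul_of_nonneg_right h (inv_nonneg.mpr hinv.le)
    calc (1 + l γ) ^ L * ‖f α * g β‖
        = (1 + l γ) ^ L * (‖f α‖ * ‖g β‖) := by rw [norm_mul]
      _ ≤ ((1 + l α) * (1 + l β)) ^ L * (‖f α‖ * ‖g β‖) := by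
          apply mul_le_mul_of_nonneg_right _ (by positivity)
          exact pow_le_pow_left₀ (by have := hpos γ; linarith) hlen L
      _ = ((1 + l α) ^ L * ‖f α‖) * ((1 + l β) ^ L * ‖g β‖) := by
          rw [mul_pow]; ring
      _ ≤ (M1 * ((1 + l α) ^ (N + 2))⁻¹) * M2 := by
          apply mul_le_mul hfL (hM2 β) hgnn
          have h0 : 0 ≤ (1 + l α) ^ L * ‖f α‖ :=
            mul_nonneg (pow_nonneg (hpos α).le _) (norm_nonneg _)
          linarith [hfL]
      _ = M1 * M2 * ((1 + l α) ^ (N + 2))⁻¹ := by ring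
  obtain ⟨M1₀, hM1₀⟩ := hf (0 + (N + 2))
  obtain ⟨M2₀, hM2₀⟩ := hg 0
  have hsummand : ∀ γ α : Γ, ‖f α * g (α⁻¹ * γ)‖ ≤ M1₀ * M2₀ * ((1 + l α) ^ (N + 2))⁻¹ := by
    intro γ α
    have := key 0 M1₀ M2₀ hM1₀ hM2₀ γ α
    simpa using this
  have hsum : ∀ γ : Γ, Summable fun α : Γ => f α * g (α⁻¹ * γ) := by
    intro γ
    exact Summable.of_norm_bounded (hS.mul_left (M1₀ * M2₀)) (hsummand γ)
  refine ⟨hsum, ?_⟩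
  intro L
  obtain ⟨M1, hM1⟩ := hf (L + (N + 2))
  obtain ⟨M2, hM2⟩ := hg L
  refine ⟨M1 * M2 * ∑' α : Γ, ((1 + l α) ^ (N + 2))⁻¹, fun γ => ?_⟩
  have hnorms : Summable fun α : Γ => ‖f α * g (α⁻¹ * γ)‖ :=
    Summable.of_nonneg_of_le (fun α => norm_nonneg _) (hsummand γ) (hS.mul_left (M1₀ * M2₀))
  calc (1 + l γ) ^ L * ‖∑' α : Γ, f α * g (α⁻¹ * γ)‖
      ≤ (1 + l γ) ^ L * ∑' α : Γ, ‖f α * g (α⁻¹ * γ)‖ := by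
        exact mul_le_mul_of_nonneg_left (norm_tsum_le_tsum_norm hnorms) (pow_nonneg (hpos γ).le _)
    _ = ∑' α : Γ, (1 + l γ) ^ L * ‖f α * g (α⁻¹ * γ)‖ := by rw [tsum_mul_left]
    _ ≤ ∑' α : Γ, M1 * M2 * ((1 + l α) ^ (N + 2))⁻¹ := by
        apply Summable.tsum_le_tsum (key L M1 M2 hM1 hM2 γ) (hnorms.mul_left _) (hS.mul_left _)
    _ = M1 * M2 * ∑' α : Γ, ((1 + l α) ^ (N + 2))⁻¹ := tsum_mul_left
end

section
/- Let Γ be a countable group acting on a measure space (X, μ) by measure-preserving transformations, and let α : X → ℂ be a Γ-invariant measurable function. Suppose φ, ψ : X → [0,1] are measurable with Σ_{γ ∈ Γ} φ(x·γ) = 1 and Σ_{γ ∈ Γ} ψ(x·γ) = 1 for all x ∈ X, and suppose |α|·φ and |α|·ψ are integrable and that Σ_γ ∫ |α φ (γ·ψ)| dμ < ∞ and Σ_γ ∫ |α ψ (γ·φ)| dμ < ∞. Then ∫_X α φ dμ = ∫_X α ψ dμ. -/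
open MeasureTheory ENNReal

private lemma aux_expand {X Γ : Type*} [Group Γ] [Countable Γ]
    [MeasurableSpace X] (μ : Measure X)
    (act : X → Γ → X)
    (hmp : ∀ γ : Γ, MeasurePreserving (fun x => act x γ) μ μ)
    (α : X → ℂ) (hα_meas : Measurable α)
    (φ ψ : X → ℝ) (hφ_meas : Measurable φ) (hψ_meas : Measurable ψ)
    (hφ01 : ∀ x, φ x ∈ Set.Icc (0 : ℝ) 1) (hψ01 : ∀ x, ψ x ∈ Set.Icc (0 : ℝ) 1)
    (hψ_sum : ∀ x, HasSum (fun γ : Γ => ψ (act x γ)) 1)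
    (hφ_int : Integrable (fun x => ‖α x‖ * φ x) μ)
    (hφψ : Summable fun γ : Γ => ∫ x, ‖α x‖ * φ x * ψ (act x γ) ∂μ) :
    ∫ x, α x * (φ x : ℂ) ∂μ
      = ∑' γ : Γ, ∫ x, α x * (φ x : ℂ) * (ψ (act x γ) : ℂ) ∂μ := by
  set f : Γ → X → ℂ := fun γ x => α x * (φ x : ℂ) * (ψ (act x γ) : ℂ) with hf
  set g : Γ → X → ℝ := fun γ x => ‖α x‖ * φ x * ψ (act x γ) with hg
  have hmeasγ : ∀ γ : Γ, Measurable fun x => act x γ := fun γ => (hmp γ).measurable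
  have hfmeas : ∀ γ, Measurable (f γ) := fun γ =>
    (hα_meas.mul (Complex.measurable_ofReal.comp hφ_meas)).mul
      (Complex.measurable_ofReal.comp (hψ_meas.comp (hmeasγ γ)))
  have hgnn : ∀ γ x, 0 ≤ g γ x := fun γ x =>
    mul_nonneg (mul_nonneg (norm_nonneg _) (hφ01 x).1) (hψ01 _).1
  have hnorm : ∀ γ x, ‖f γ x‖ = g γ x := by
    intro γ x
    simp only [hf, hg, norm_mul, Complex.norm_real,
      Real.norm_of_nonneg (hφ01 x).1, Real.norm_of_nonneg (hψ01 _).1]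
  have hg_int : ∀ γ, Integrable (g γ) μ := by
    intro γ
    refine Integrable.mono hφ_int
      (((hα_meas.norm.mul hφ_meas).mul (hψ_meas.comp (hmeasγ γ))).aestronglyMeasurable)
      (Filter.Eventually.of_forall fun x => ?_)
    rw [Real.norm_of_nonneg (hgnn γ x), Real.norm_of_nonneg
      (mul_nonneg (norm_nonneg _) (hφ01 x).1)]
    calc ‖α x‖ * φ x * ψ (act x γ) ≤ ‖α x‖ * φ x * 1 := by
          exact mul_le_mul_of_nonneg_left (hψ01 _).2
            (mul_nonneg (norm_nonneg _) (hφ01 x).1)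
      _ = ‖α x‖ * φ x := mul_one _
  have hlint : ∑' γ : Γ, ∫⁻ x, ‖f γ x‖₊ ∂μ ≠ ∞ := by
    have h1 : ∀ γ : Γ, ∫⁻ x, ‖f γ x‖₊ ∂μ = ENNReal.ofReal (∫ x, g γ x ∂μ) := by
      intro γ
      rw [ofReal_integral_eq_lintegral_ofReal (hg_int γ)
        (Filter.Eventually.of_forall (hgnn γ))]
      congr 1
      ext x
      rw [← hnorm]
      exact (ofReal_norm _).symm
    rw [tsum_congr h1, ← ENNReal.ofReal_tsum_of_nonneg
      (fun γ => integral_nonneg (hgnn γ)) hφψ]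
    exact ENNReal.ofReal_ne_top
  have hpt : ∀ x, ∑' γ : Γ, f γ x = α x * (φ x : ℂ) := by
    intro x
    have h : HasSum (fun γ : Γ => ((ψ (act x γ) : ℝ) : ℂ)) 1 := by
      have := Complex.ofRealCLM.hasSum (hψ_sum x)
      simpa using this
    have h2 := (h.mul_left (α x * (φ x : ℂ))).tsum_eq
    simpa using h2
  calc ∫ x, α x * (φ x : ℂ) ∂μ = ∫ x, ∑' γ : Γ, f γ x ∂μ := by
        simp_rw [hpt]
    _ = ∑' γ : Γ, ∫ x, f γ x ∂μ :=
        integral_tsum (fun γ => (hfmeas γ).aestronglyMeasurable) hlint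

/-- Let a countable group `Γ` act on a measure space `(X, μ)` by measure-preserving
transformations and let `α : X → ℂ` be a `Γ`-invariant measurable function.  If
`φ, ψ : X → [0,1]` are measurable with `Σ_γ φ(x·γ) = 1` and `Σ_γ ψ(x·γ) = 1` for every
`x`, and `|α|φ` and `|α|ψ` are integrable with
`Σ_γ ∫ |α φ (γ·ψ)| dμ < ∞` and `Σ_γ ∫ |α ψ (γ·φ)| dμ < ∞`,
then `∫ α φ dμ = ∫ α ψ dμ`. -/
theorem averaged_integral_independent_of_cutoff {X Γ : Type*} [Group Γ] [Countable Γ]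
    [MeasurableSpace X] (μ : Measure X)
    (act : X → Γ → X)
    (act_one : ∀ x, act x 1 = x)
    (act_mul : ∀ x g g', act (act x g) g' = act x (g * g'))
    (hmp : ∀ γ : Γ, MeasurePreserving (fun x => act x γ) μ μ)
    (α : X → ℂ) (hα_meas : Measurable α)
    (hα_inv : ∀ x γ, α (act x γ) = α x)
    (φ ψ : X → ℝ) (hφ_meas : Measurable φ) (hψ_meas : Measurable ψ)
    (hφ01 : ∀ x, φ x ∈ Set.Icc (0 : ℝ) 1) (hψ01 : ∀ x, ψ x ∈ Set.Icc (0 : ℝ) 1)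
    (hφ_sum : ∀ x, HasSum (fun γ : Γ => φ (act x γ)) 1)
    (hψ_sum : ∀ x, HasSum (fun γ : Γ => ψ (act x γ)) 1)
    (hφ_int : Integrable (fun x => ‖α x‖ * φ x) μ)
    (hψ_int : Integrable (fun x => ‖α x‖ * ψ x) μ)
    (hφψ : Summable fun γ : Γ => ∫ x, ‖α x‖ * φ x * ψ (act x γ) ∂μ)
    (hψφ : Summable fun γ : Γ => ∫ x, ‖α x‖ * ψ x * φ (act x γ) ∂μ) :
    ∫ x, α x * (φ x : ℂ) ∂μ = ∫ x, α x * (ψ x : ℂ) ∂μ := by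
  rw [aux_expand μ act hmp α hα_meas φ ψ hφ_meas hψ_meas hφ01 hψ01 hψ_sum hφ_int hφψ,
    aux_expand μ act hmp α hα_meas ψ φ hψ_meas hφ_meas hψ01 hφ01 hφ_sum hψ_int hψφ]
  have key : ∀ γ : Γ, ∫ x, α x * (φ x : ℂ) * (ψ (act x γ) : ℂ) ∂μ
      = ∫ x, α x * (ψ x : ℂ) * (φ (act x γ⁻¹) : ℂ) ∂μ := by
    intro γ
    have hT := hmp γ⁻¹
    have hFmeas : Measurable (fun x => α x * (φ x : ℂ) * (ψ (act x γ) : ℂ)) :=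
      (hα_meas.mul (Complex.measurable_ofReal.comp hφ_meas)).mul
        (Complex.measurable_ofReal.comp (hψ_meas.comp (hmp γ).measurable))
    calc ∫ x, α x * (φ x : ℂ) * (ψ (act x γ) : ℂ) ∂μ
        = ∫ x, α x * (φ x : ℂ) * (ψ (act x γ) : ℂ) ∂(Measure.map (fun x => act x γ⁻¹) μ) := by
          rw [hT.map_eq]
      _ = ∫ x, α (act x γ⁻¹) * (φ (act x γ⁻¹) : ℂ) * (ψ (act (act x γ⁻¹) γ) : ℂ) ∂μ :=
          integral_map hT.measurable.aemeasurable
            (hT.map_eq ▸ hFmeas.aestronglyMeasurable)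
      _ = ∫ x, α x * (ψ x : ℂ) * (φ (act x γ⁻¹) : ℂ) ∂μ := by
          congr 1
          ext x
          rw [act_mul, inv_mul_cancel, act_one, hα_inv]
          ring
  rw [tsum_congr key]
  exact ((Equiv.inv Γ).tsum_eq fun γ => ∫ x, α x * (ψ x : ℂ) * (φ (act x γ) : ℂ) ∂μ)
end

section
/- Let R be a unital ring and let D, P ∈ R. Set S₊ = 1 − P D and S₋ = 1 − D P. Then the following identities hold: D S₊ = S₋ D, S₊ P = P S₋, and the 2×2 matrix p = [[S₊², S₊(1+S₊)P], [S₋ D, 1 − S₋²]] over R is an idempotent: p² = p. -/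
/-- The index idempotent built from an operator `D` and a parametrix `P`,
with remainders `S₊ = 1 - P D` and `S₋ = 1 - D P`:
`p = [[S₊², S₊(1+S₊)P], [S₋ D, 1 − S₋²]]`. -/
def indexIdempotent {R : Type*} [Ring R] (D P : R) : Matrix (Fin 2) (Fin 2) R :=
  !![(1 - P * D) ^ 2, (1 - P * D) * (1 + (1 - P * D)) * P;
     (1 - D * P) * D, 1 - (1 - D * P) ^ 2]

/-- In any unital ring, with `S₊ = 1 − PD` and `S₋ = 1 − DP` one has
`D S₊ = S₋ D`, `S₊ P = P S₋`, and the matrix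
`p = [[S₊², S₊(1+S₊)P], [S₋D, 1 − S₋²]]` is an idempotent: `p² = p`. -/
theorem parametrix_identities_and_idempotent {R : Type*} [Ring R] (D P : R) :
    D * (1 - P * D) = (1 - D * P) * D ∧
    (1 - P * D) * P = P * (1 - D * P) ∧
    indexIdempotent D P * indexIdempotent D P = indexIdempotent D P := by
  refine ⟨by noncomm_ring, by noncomm_ring, ?_⟩
  unfold indexIdempotent
  ext i j
  fin_cases i <;> fin_cases j <;>
    simp [Matrix.mul_apply, Fin.sum_univ_succ] <;> noncomm_ring
end

section
/- Let A be a unital Banach algebra, a ∈ A, and let B : ℝ_{>0} → A be continuously differentiable. Then s ↦ exp(−B(s)) is differentiable and d/ds exp(−B(s)) = −∫₀¹ exp(−u B(s)) B'(s) exp(−(1−u) B(s)) du. -/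
open NormedSpace Filter Asymptotics
open scoped Nat Topology

section Aux
set_option linter.unusedSectionVars false

variable {A : Type*} [NormedRing A] [NormedAlgebra ℝ A] [CompleteSpace A]



lemma duhamel_norm_exp_le (x : A) :
    ‖exp x‖ ≤ (‖(1 : A)‖ + 1) * Real.exp ‖x‖ := by
  have hx : exp x = ∑' n : ℕ, (n !⁻¹ : ℝ) • x ^ n := by
    rw [exp_eq_tsum ℝ]
  have hpt : ∀ n : ℕ, ‖(n !⁻¹ : ℝ) • x ^ n‖ ≤ (‖(1 : A)‖ + 1) * (‖x‖ ^ n / n !) := by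
    intro n
    rw [norm_smul, Real.norm_eq_abs, abs_of_nonneg (by positivity)]
    rcases Nat.eq_zero_or_pos n with h | h
    · subst h
      simp only [Nat.factorial_zero, Nat.cast_one, inv_one, one_mul, pow_zero, div_one]
      linarith [norm_nonneg (1 : A)]
    · have h1 : ‖x ^ n‖ ≤ ‖x‖ ^ n := norm_pow_le' x h
      have h3 : (1 : ℝ) ≤ ‖(1 : A)‖ + 1 := by linarith [norm_nonneg (1 : A)]
      calc (n !⁻¹ : ℝ) * ‖x ^ n‖ ≤ (n !⁻¹ : ℝ) * ‖x‖ ^ n := by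
            gcongr
        _ = ‖x‖ ^ n / n ! := by ring
        _ ≤ (‖(1 : A)‖ + 1) * (‖x‖ ^ n / n !) := le_mul_of_one_le_left (by positivity) h3
  have hsum : Summable fun n : ℕ => ‖(n !⁻¹ : ℝ) • x ^ n‖ := norm_expSeries_summable' x
  have hsum2 : Summable fun n : ℕ => (‖(1 : A)‖ + 1) * (‖x‖ ^ n / n !) :=
    (Real.summable_pow_div_factorial ‖x‖).mul_left _
  calc ‖exp x‖ ≤ ∑' n : ℕ, ‖(n !⁻¹ : ℝ) • x ^ n‖ := by
        rw [hx]; exact norm_tsum_le_tsum_norm hsum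
    _ ≤ ∑' n : ℕ, (‖(1 : A)‖ + 1) * (‖x‖ ^ n / n !) := Summable.tsum_le_tsum hpt hsum hsum2
    _ = (‖(1 : A)‖ + 1) * ∑' n : ℕ, ‖x‖ ^ n / n ! := tsum_mul_left
    _ = (‖(1 : A)‖ + 1) * Real.exp ‖x‖ := by
        rw [Real.exp_eq_exp_ℝ, exp_eq_tsum_div]


lemma duhamel_exp_sub_exp (X Y : A) :
    exp Y - exp X
      = ∫ u in (0:ℝ)..1, exp (u • Y) * (Y - X) * exp ((1 - u) • X) := by
  have hcont : Continuous fun u : ℝ => exp (u • Y) * (Y - X) * exp ((1 - u) • X) := by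
    exact (((show Continuous (exp : A → A) from continuous_iff_continuousAt.2 fun x => (exp_analytic (𝕂 := ℝ) x).continuousAt).comp (continuous_id.smul continuous_const)).mul
      continuous_const).mul
      ((show Continuous (exp : A → A) from continuous_iff_continuousAt.2 fun x => (exp_analytic (𝕂 := ℝ) x).continuousAt).comp ((continuous_const.sub continuous_id).smul continuous_const))
  have hderiv : ∀ u ∈ Set.uIcc (0:ℝ) 1,
      HasDerivAt (fun u : ℝ => exp (u • Y) * exp ((1 - u) • X))
        (exp (u • Y) * (Y - X) * exp ((1 - u) • X)) u := by
    intro u _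
    have h1 : HasDerivAt (fun u : ℝ => exp (u • Y)) (Y * exp (u • Y)) u :=
      hasDerivAt_exp_smul_const' Y u
    have hlin : HasDerivAt (fun v : ℝ => 1 - v) (-1) u := (hasDerivAt_id u).const_sub 1
    have h2' := HasDerivAt.scomp_of_eq (x := u) (hasDerivAt_exp_smul_const' X ((1 : ℝ) - u)) hlin rfl
    have h2 : HasDerivAt (fun v : ℝ => exp ((1 - v) • X))
        (-(X * exp ((1 - u) • X))) u := by
      simpa [Function.comp_def] using h2'
    have hmul := h1.mul h2
    convert hmul using 1
    · rfl
    have hc : exp (u • Y) * Y = Y * exp (u • Y) :=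
      (((Commute.refl Y).smul_left u).exp_left).eq
    rw [mul_sub, sub_mul, hc, mul_neg, ← sub_eq_add_neg, mul_assoc, mul_assoc]
  rw [intervalIntegral.integral_eq_sub_of_hasDerivAt hderiv (hcont.intervalIntegrable 0 1)]
  simp [exp_zero]

lemma duhamel_norm_exp_smul_le {u : ℝ} (hu : |u| ≤ 1) (x : A) :
    ‖exp (u • x)‖ ≤ (‖(1 : A)‖ + 1) * Real.exp ‖x‖ := by
  refine (duhamel_norm_exp_le _).trans ?_
  refine mul_le_mul_of_nonneg_left (Real.exp_le_exp.2 ?_) (by positivity)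
  rw [norm_smul, Real.norm_eq_abs]
  exact mul_le_of_le_one_left (norm_nonneg x) hu

lemma duhamel_norm_exp_sub_exp_le (X Y : A) :
    ‖exp Y - exp X‖
      ≤ ((‖(1 : A)‖ + 1) * Real.exp ‖Y‖) * ((‖(1 : A)‖ + 1) * Real.exp ‖X‖) * ‖Y - X‖ := by
  rw [duhamel_exp_sub_exp]
  have hb : ∀ u ∈ Set.uIoc (0:ℝ) 1,
      ‖exp (u • Y) * (Y - X) * exp ((1 - u) • X)‖
        ≤ ((‖(1 : A)‖ + 1) * Real.exp ‖Y‖) * ((‖(1 : A)‖ + 1) * Real.exp ‖X‖) * ‖Y - X‖ := by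
    intro u hu
    rw [Set.uIoc_of_le zero_le_one] at hu
    have hu1 : |u| ≤ 1 := abs_le.2 ⟨by linarith [hu.1], hu.2⟩
    have hu2 : |1 - u| ≤ 1 := abs_le.2 ⟨by linarith [hu.2], by linarith [hu.1]⟩
    calc ‖exp (u • Y) * (Y - X) * exp ((1 - u) • X)‖
        ≤ ‖exp (u • Y)‖ * ‖Y - X‖ * ‖exp ((1 - u) • X)‖ :=
          (norm_mul_le _ _).trans (by gcongr; exact norm_mul_le _ _)
      _ ≤ ((‖(1 : A)‖ + 1) * Real.exp ‖Y‖) * ‖Y - X‖ * ((‖(1 : A)‖ + 1) * Real.exp ‖X‖) := by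
          gcongr
          · exact duhamel_norm_exp_smul_le hu1 Y
          · exact duhamel_norm_exp_smul_le hu2 X
      _ = ((‖(1 : A)‖ + 1) * Real.exp ‖Y‖) * ((‖(1 : A)‖ + 1) * Real.exp ‖X‖) * ‖Y - X‖ := by
          ring
  have := intervalIntegral.norm_integral_le_of_norm_le_const hb
  simpa using this

lemma duhamel_norm_exp_neg_smul_sub_le {u : ℝ} (h0 : 0 ≤ u) (h1 : u ≤ 1) (X Y : A) :
    ‖exp (-(u • X)) - exp (-(u • Y))‖
      ≤ ((‖(1 : A)‖ + 1) * Real.exp ‖X‖) * ((‖(1 : A)‖ + 1) * Real.exp ‖Y‖) * ‖Y - X‖ := by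
  have hu1 : |u| ≤ 1 := abs_le.2 ⟨by linarith, h1⟩
  have := duhamel_norm_exp_sub_exp_le (X := -(u • Y)) (Y := -(u • X)) (A := A)
  refine this.trans ?_
  have hXY : -(u • X) - -(u • Y) = u • (Y - X) := by rw [smul_sub]; abel
  rw [hXY, norm_neg, norm_neg, norm_smul, Real.norm_eq_abs]
  have eX : Real.exp ‖u • X‖ ≤ Real.exp ‖X‖ := by
    refine Real.exp_le_exp.2 ?_
    rw [norm_smul, Real.norm_eq_abs]
    exact mul_le_of_le_one_left (norm_nonneg X) hu1
  have eY : Real.exp ‖u • Y‖ ≤ Real.exp ‖Y‖ := by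
    refine Real.exp_le_exp.2 ?_
    rw [norm_smul, Real.norm_eq_abs]
    exact mul_le_of_le_one_left (norm_nonneg Y) hu1
  have hc : (0:ℝ) ≤ ‖(1 : A)‖ + 1 := by positivity
  have h2 : |u| * ‖Y - X‖ ≤ ‖Y - X‖ := mul_le_of_le_one_left (norm_nonneg _) hu1
  gcongr <;>
    first
      | exact mul_le_of_le_one_left (norm_nonneg X) hu1
      | exact mul_le_of_le_one_left (norm_nonneg Y) hu1
      | exact h2
      | (rw [norm_smul, Real.norm_eq_abs]; exact h2)

lemma duhamel_norm_exp_neg_smul_le {u : ℝ} (hu : |u| ≤ 1) (x : A) :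
    ‖exp (-(u • x))‖ ≤ (‖(1 : A)‖ + 1) * Real.exp ‖x‖ := by
  rw [← neg_smul]
  exact duhamel_norm_exp_smul_le (by rwa [abs_neg]) x

end Aux

/-- Duhamel's formula for the derivative of the exponential of a varying element of a
unital Banach algebra: if `B : ℝ_{>0} → A` is continuously differentiable (with
derivative `B'`), then `s ↦ exp(−B(s))` is differentiable and
`d/ds exp(−B(s)) = −∫₀¹ exp(−u B(s)) B'(s) exp(−(1−u) B(s)) du`. -/
theorem deriv_exp_neg_duhamel {A : Type*} [NormedRing A] [NormedAlgebra ℝ A]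
    [CompleteSpace A] (B B' : ℝ → A)
    (hB : ∀ s ∈ Set.Ioi (0 : ℝ), HasDerivAt B (B' s) s)
    (hB' : ContinuousOn B' (Set.Ioi (0 : ℝ))) :
    ∀ s ∈ Set.Ioi (0 : ℝ),
      HasDerivAt (fun u => exp (-(B u)))
        (-∫ u in (0 : ℝ)..1,
          exp (-(u • B s)) * B' s * exp (-((1 - u) • B s))) s := by
  intro s hs
  set D : A := ∫ u in (0:ℝ)..1, exp (-(u • B s)) * B' s * exp (-((1 - u) • B s)) with hD
  rw [hasDerivAt_iff_isLittleO]
  have contE : ∀ x : A, Continuous fun u : ℝ => exp (-(u • x)) := fun x =>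
    (show Continuous (exp : A → A) from continuous_iff_continuousAt.2 fun x => (exp_analytic (𝕂 := ℝ) x).continuousAt).comp ((continuous_id.smul continuous_const).neg)
  have contE2 : ∀ x : A, Continuous fun u : ℝ => exp (-((1 - u) • x)) := fun x =>
    (show Continuous (exp : A → A) from continuous_iff_continuousAt.2 fun x => (exp_analytic (𝕂 := ℝ) x).continuousAt).comp (((continuous_const.sub continuous_id).smul continuous_const).neg)
  have key : ∀ t : ℝ,
      exp (-(B t)) - exp (-(B s)) - (t - s) • (-D)
        = ∫ u in (0:ℝ)..1,
            (exp (-(u • B t)) * (B s - B t + (t - s) • B' s)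
              + (exp (-(u • B s)) - exp (-(u • B t))) * ((t - s) • B' s))
              * exp (-((1 - u) • B s)) := by
    intro t
    have h1 : exp (-(B t)) - exp (-(B s))
        = ∫ u in (0:ℝ)..1, exp (-(u • B t)) * (B s - B t) * exp (-((1 - u) • B s)) := by
      have h := duhamel_exp_sub_exp (X := -(B s)) (Y := -(B t))
      simpa only [smul_neg, neg_sub_neg] using h
    have h2 : (t - s) • D
        = ∫ u in (0:ℝ)..1,
            exp (-(u • B s)) * ((t - s) • B' s) * exp (-((1 - u) • B s)) := by
      rw [hD, ← intervalIntegral.integral_smul]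
      refine intervalIntegral.integral_congr fun u _ => ?_
      simp only [smul_mul_assoc, mul_smul_comm]
    have hi1 : IntervalIntegrable
        (fun u : ℝ => exp (-(u • B t)) * (B s - B t) * exp (-((1 - u) • B s)))
        MeasureTheory.volume 0 1 :=
      (((contE (B t)).mul continuous_const).mul (contE2 (B s))).intervalIntegrable 0 1
    have hi2 : IntervalIntegrable
        (fun u : ℝ => exp (-(u • B s)) * ((t - s) • B' s) * exp (-((1 - u) • B s)))
        MeasureTheory.volume 0 1 :=
      (((contE (B s)).mul continuous_const).mul (contE2 (B s))).intervalIntegrable 0 1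
    rw [smul_neg, sub_neg_eq_add, h1, h2, ← intervalIntegral.integral_add hi1 hi2]
    refine intervalIntegral.integral_congr fun u _ => ?_
    simp only [mul_add, add_mul, sub_mul]
    abel
  have hR : (fun t => B t - B s - (t - s) • B' s) =o[𝓝 s] fun t => t - s :=
    hasDerivAt_iff_isLittleO.mp (hB s hs)
  have hBc : ContinuousAt B s := (hB s hs).continuousAt
  have h0 : Tendsto (fun t => ‖B t - B s‖) (𝓝 s) (𝓝 0) := by
    have := hBc.tendsto.sub (tendsto_const_nhds (x := B s))
    rw [sub_self] at this
    simpa using this.norm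
  have hev : ∀ᶠ t in 𝓝 s, ‖B t - B s‖ ≤ 1 :=
    (h0.eventually_lt_const one_pos).mono fun t ht => ht.le
  have hc1 : (0:ℝ) ≤ ‖(1 : A)‖ + 1 := by positivity
  have hbound : ∀ᶠ t in 𝓝 s,
      ‖exp (-(B t)) - exp (-(B s)) - (t - s) • (-D)‖
        ≤ (((‖(1 : A)‖ + 1) * Real.exp (‖B s‖ + 1)) * ((‖(1 : A)‖ + 1) * Real.exp ‖B s‖)
            + ((‖(1 : A)‖ + 1) * Real.exp ‖B s‖) ^ 2 * ((‖(1 : A)‖ + 1) * Real.exp (‖B s‖ + 1))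
              * ‖B' s‖)
          * (‖B t - B s - (t - s) • B' s‖ + ‖B t - B s‖ * |t - s|) := by
    filter_upwards [hev] with t ht
    have hBt : ‖B t‖ ≤ ‖B s‖ + 1 := by
      have h := norm_sub_norm_le (B t) (B s)
      linarith
    rw [key t]
    have hb : ∀ u ∈ Set.uIoc (0:ℝ) 1,
        ‖(exp (-(u • B t)) * (B s - B t + (t - s) • B' s)
            + (exp (-(u • B s)) - exp (-(u • B t))) * ((t - s) • B' s))
            * exp (-((1 - u) • B s))‖
          ≤ ((‖(1 : A)‖ + 1) * Real.exp (‖B s‖ + 1)) * ‖B t - B s - (t - s) • B' s‖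
              * ((‖(1 : A)‖ + 1) * Real.exp ‖B s‖)
            + ((‖(1 : A)‖ + 1) * Real.exp ‖B s‖) * ((‖(1 : A)‖ + 1) * Real.exp (‖B s‖ + 1))
              * ‖B t - B s‖ * (|t - s| * ‖B' s‖) * ((‖(1 : A)‖ + 1) * Real.exp ‖B s‖) := by
      intro u hu
      rw [Set.uIoc_of_le zero_le_one] at hu
      have hu0 : (0:ℝ) ≤ u := hu.1.le
      have hu1 : u ≤ 1 := hu.2
      have habs : |u| ≤ 1 := abs_le.2 ⟨by linarith, hu1⟩
      have habs2 : |1 - u| ≤ 1 := abs_le.2 ⟨by linarith, by linarith⟩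
      have e2 : ‖exp (-((1 - u) • B s))‖ ≤ (‖(1 : A)‖ + 1) * Real.exp ‖B s‖ :=
        duhamel_norm_exp_neg_smul_le habs2 (B s)
      have e1 : ‖exp (-(u • B t))‖ ≤ (‖(1 : A)‖ + 1) * Real.exp (‖B s‖ + 1) :=
        (duhamel_norm_exp_neg_smul_le habs (B t)).trans
          (mul_le_mul_of_nonneg_left (Real.exp_le_exp.2 hBt) hc1)
      have ed : ‖exp (-(u • B s)) - exp (-(u • B t))‖
          ≤ ((‖(1 : A)‖ + 1) * Real.exp ‖B s‖) * ((‖(1 : A)‖ + 1) * Real.exp (‖B s‖ + 1))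
              * ‖B t - B s‖ := by
        refine (duhamel_norm_exp_neg_smul_sub_le hu0 hu1 (B s) (B t)).trans ?_
        have : Real.exp ‖B t‖ ≤ Real.exp (‖B s‖ + 1) := Real.exp_le_exp.2 hBt
        gcongr
      have eP : ‖(t - s) • B' s‖ = |t - s| * ‖B' s‖ := by
        rw [norm_smul, Real.norm_eq_abs]
      have hRnorm : ‖B s - B t + (t - s) • B' s‖ = ‖B t - B s - (t - s) • B' s‖ := by
        rw [show B s - B t + (t - s) • B' s = -(B t - B s - (t - s) • B' s) by abel, norm_neg]
      calc ‖(exp (-(u • B t)) * (B s - B t + (t - s) • B' s)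
              + (exp (-(u • B s)) - exp (-(u • B t))) * ((t - s) • B' s))
              * exp (-((1 - u) • B s))‖
          ≤ (‖exp (-(u • B t))‖ * ‖B s - B t + (t - s) • B' s‖
              + ‖exp (-(u • B s)) - exp (-(u • B t))‖ * ‖(t - s) • B' s‖)
              * ‖exp (-((1 - u) • B s))‖ := by
            refine (norm_mul_le _ _).trans ?_
            gcongr
            exact (norm_add_le _ _).trans (by gcongr <;> exact norm_mul_le _ _)
        _ ≤ (((‖(1 : A)‖ + 1) * Real.exp (‖B s‖ + 1)) * ‖B t - B s - (t - s) • B' s‖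
              + (((‖(1 : A)‖ + 1) * Real.exp ‖B s‖) * ((‖(1 : A)‖ + 1) * Real.exp (‖B s‖ + 1))
                  * ‖B t - B s‖) * (|t - s| * ‖B' s‖))
              * ((‖(1 : A)‖ + 1) * Real.exp ‖B s‖) := by
            rw [hRnorm, eP]
            gcongr
        _ = ((‖(1 : A)‖ + 1) * Real.exp (‖B s‖ + 1)) * ‖B t - B s - (t - s) • B' s‖
              * ((‖(1 : A)‖ + 1) * Real.exp ‖B s‖)
            + ((‖(1 : A)‖ + 1) * Real.exp ‖B s‖) * ((‖(1 : A)‖ + 1) * Real.exp (‖B s‖ + 1))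
              * ‖B t - B s‖ * (|t - s| * ‖B' s‖) * ((‖(1 : A)‖ + 1) * Real.exp ‖B s‖) := by
            ring
    refine (intervalIntegral.norm_integral_le_of_norm_le_const hb).trans ?_
    have h10 : |(1:ℝ) - 0| = 1 := by norm_num
    rw [h10, mul_one]
    have ha : (0:ℝ) ≤ ‖B t - B s - (t - s) • B' s‖ := norm_nonneg _
    have hbn : (0:ℝ) ≤ ‖B t - B s‖ := norm_nonneg _
    have hh : (0:ℝ) ≤ |t - s| := abs_nonneg _
    have hp : (0:ℝ) ≤ ‖B' s‖ := norm_nonneg _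
    have hN : (0:ℝ) ≤ (‖(1 : A)‖ + 1) * Real.exp (‖B s‖ + 1) := by positivity
    have hMs : (0:ℝ) ≤ (‖(1 : A)‖ + 1) * Real.exp ‖B s‖ := by positivity
    nlinarith [mul_nonneg (mul_nonneg hN hMs) ha, mul_nonneg (mul_nonneg hbn hh) hp,
      mul_nonneg hN hMs, mul_nonneg (mul_nonneg hMs hMs) hN,
      mul_nonneg (mul_nonneg (mul_nonneg (mul_nonneg hMs hMs) hN) hp) (mul_nonneg hbn hh),
      mul_nonneg (mul_nonneg (mul_nonneg hN hMs) hp) ha,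
      mul_nonneg (mul_nonneg hN hMs) (mul_nonneg hbn hh)]
  have hg : (fun t => ‖B t - B s - (t - s) • B' s‖ + ‖B t - B s‖ * |t - s|)
      =o[𝓝 s] fun t => t - s := by
    refine hR.norm_left.add ?_
    have h1 : (fun t => ‖B t - B s‖) =o[𝓝 s] fun _ => (1:ℝ) := by
      rw [isLittleO_one_iff]
      exact h0
    have h2 : (fun t : ℝ => |t - s|) =O[𝓝 s] fun t => t - s :=
      isBigO_iff.2 ⟨1, by filter_upwards with t; simp [Real.norm_eq_abs, abs_abs]⟩
    simpa using h1.mul_isBigO h2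
  refine IsBigO.trans_isLittleO ?_ hg
  refine isBigO_iff.2 ⟨(((‖(1 : A)‖ + 1) * Real.exp (‖B s‖ + 1))
      * ((‖(1 : A)‖ + 1) * Real.exp ‖B s‖)
    + ((‖(1 : A)‖ + 1) * Real.exp ‖B s‖) ^ 2 * ((‖(1 : A)‖ + 1) * Real.exp (‖B s‖ + 1))
      * ‖B' s‖), ?_⟩
  filter_upwards [hbound] with t ht
  have hx : (0:ℝ) ≤ ‖B t - B s - (t - s) • B' s‖ + ‖B t - B s‖ * |t - s| := by positivity
  rw [Real.norm_of_nonneg hx]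
  exact ht
end

section
/- Let Ω = ⊕_{n≥0} Ω^n be a graded unital algebra with a degree-one derivation ∇̃ (satisfying the graded Leibniz rule ∇̃(ωη) = ∇̃(ω)η + (−1)^{|ω|} ω ∇̃(η)), and suppose there exists Θ ∈ Ω² (or acting on Ω) with ∇̃²(ω) = Θω − ωΘ for all ω. Define Ω̃ = Ω ⊕ XΩ ⊕ ΩX ⊕ XΩX with X a formal odd variable of degree 1, multiplication rules (ω₁X)ω₂ = ω₁(Xω₂) = 0 and (ω₁X)(Xω₂) = ω₁Θω₂, and differential d generated by dω = ∇̃(ω) + Xω + (−1)^{|ω|} ωX and dX = 0. Then d² = 0 on Ω̃. -/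
/-! Connes's X-trick.  Let `Ω` be a graded unital algebra with parity operator `ε`
(`ε ω = (−1)^{|ω|} ω` on homogeneous elements), a degree-one derivation `der = ∇̃`
satisfying the graded Leibniz rule `∇̃(ωη) = ∇̃(ω)η + ε(ω)∇̃(η)`, and `Θ` with
`∇̃²(ω) = Θω − ωΘ`.  The enlarged algebra `Ω̃ = Ω ⊕ XΩ ⊕ ΩX ⊕ XΩX` is encoded as
quadruples `(a, b, c, e) ↔ a + Xb + cX + XeX`, with the multiplication rules
`(ω₁X)ω₂ = ω₁(Xω₂) = 0` and `(ω₁X)(Xω₂) = ω₁Θω₂`, and the differential generated by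
`dω = ∇̃(ω) + Xω + (−1)^{|ω|}ωX` and `dX = 0`. -/

/-- Multiplication on `Ω̃ = Ω ⊕ XΩ ⊕ ΩX ⊕ XΩX` determined by the rules
`(ω₁X)ω₂ = ω₁(Xω₂) = 0`, `(ω₁X)(Xω₂) = ω₁Θω₂`. -/
def xtrickMul {Ω : Type*} [Ring Ω] (Θ : Ω) (v w : Ω × Ω × Ω × Ω) : Ω × Ω × Ω × Ω :=
  (v.1 * w.1 + v.2.2.1 * Θ * w.2.1,
   v.2.1 * w.1 + v.2.2.2 * Θ * w.2.1,
   v.1 * w.2.2.1 + v.2.2.1 * Θ * w.2.2.2,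
   v.2.1 * w.2.2.1 + v.2.2.2 * Θ * w.2.2.2)

/-- The differential on `Ω̃` generated (via the graded Leibniz rule) by
`dω = ∇̃(ω) + Xω + (−1)^{|ω|}ωX` (the last sign encoded by the parity `ε`) and
`dX = 0`. -/
def xtrickD {Ω : Type*} [Ring Ω] [Algebra ℂ Ω] (der : Ω →ₗ[ℂ] Ω) (ε : Ω →ₐ[ℂ] Ω)
    (Θ : Ω) (v : Ω × Ω × Ω × Ω) : Ω × Ω × Ω × Ω :=
  (der v.1 - Θ * v.2.1 + ε v.2.2.1 * Θ,
   v.1 - der v.2.1 - ε v.2.2.2 * Θ,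
   ε v.1 + der v.2.2.1 - Θ * v.2.2.2,
   -ε v.2.1 + v.2.2.1 - der v.2.2.2)

/-- Connes's X-trick: on `Ω̃ = Ω ⊕ XΩ ⊕ ΩX ⊕ XΩX` the differential generated by
`dω = ∇̃(ω) + Xω + (−1)^{|ω|}ωX`, `dX = 0` squares to zero. -/
theorem xtrick_d_squared_eq_zero {Ω : Type*} [Ring Ω] [Algebra ℂ Ω]
    (der : Ω →ₗ[ℂ] Ω) (ε : Ω →ₐ[ℂ] Ω) (Θ : Ω)
    (hε2 : ∀ x, ε (ε x) = x)
    (hεder : ∀ x, ε (der x) = -der (ε x))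
    (hLeibniz : ∀ x y, der (x * y) = der x * y + ε x * der y)
    (hcurv : ∀ x, der (der x) = Θ * x - x * Θ)
    (hεΘ : ε Θ = Θ)
    (hBianchi : der Θ = 0) :
    ∀ v : Ω × Ω × Ω × Ω, xtrickD der ε Θ (xtrickD der ε Θ v) = 0 := by
  rintro ⟨a, b, c, e⟩
  simp only [xtrickD, Prod.ext_iff, Prod.fst_zero, Prod.snd_zero, map_sub, map_add, map_neg,
    map_mul, hε2, hεder, hLeibniz, hcurv, hεΘ, hBianchi, zero_mul, mul_zero]
  refine ⟨?_, ?_, ?_, ?_⟩ <;> noncomm_ring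
end

section
/- Let A be a graded algebra and let STR be a graded trace on A with values in a vector space V (i.e. STR([a,b]) = 0 for graded commutators). Let ∇ be an odd element of (an algebra containing) A acting by graded commutator, and suppose STR ∘ [∇, ·] = d ∘ STR for a linear map d : V → V. Then for any invertible-curvature setup with idempotent p ∈ M₂(A⁺) and p₀ = diag(0,1), the form STR(p exp((p∇p)²) p − p₀ exp((p₀∇p₀)²) p₀) (exponential defined as a formal power series, finite in each graded degree) is d-closed. -/
/-! Closedness of the Chern character form
`STR(p e^{(p∇p)²} p − p₀ e^{(p₀∇p₀)²} p₀)`.  Here `A` is a graded algebra with parity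
operator `ε`, `δ = [∇, ·]` is the odd (flat) derivation given by graded commutator
with the connection `∇`, `STR` is a graded trace with values in `V` satisfying
`STR ∘ [∇, ·] = d ∘ STR`, and the curvature is `(p∇p)² = p (δp)(δp) p`.  The
exponential is the formal power series, which is a finite sum since the curvature is
nilpotent (it is finite in each graded degree). -/

/-- Truncated exponential series `Σ_{k<N} x^k / k!` (equal to the full formal
exponential when `x^N = 0`). -/
noncomputable def expoN {A : Type*} [Ring A] [Algebra ℂ A] (N : ℕ) (x : A) : A :=
  ∑ k ∈ Finset.range N, (Nat.factorial k : ℂ)⁻¹ • x ^ k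

/-- The entrywise extension of `δ` to `2×2` matrices. -/
def matMap {A : Type*} [Ring A] [Algebra ℂ A] (δ : A →ₗ[ℂ] A)
    (m : Matrix (Fin 2) (Fin 2) A) : Matrix (Fin 2) (Fin 2) A :=
  m.map fun a => δ a

/-- `STR` extended to matrices by composing with the trace. -/
noncomputable def STR2 {A V : Type*} [Ring A] [Algebra ℂ A] [AddCommGroup V] [Module ℂ V]
    (STR : A →ₗ[ℂ] V) : Matrix (Fin 2) (Fin 2) A →ₗ[ℂ] V where
  toFun m := STR (m 0 0) + STR (m 1 1)
  map_add' m n := by simp [Matrix.add_apply]; abel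
  map_smul' c m := by simp [Matrix.smul_apply, smul_add]

/-- `matMap δ` as a linear map. -/
noncomputable def delta2 {A : Type*} [Ring A] [Algebra ℂ A] (δ : A →ₗ[ℂ] A) :
    Matrix (Fin 2) (Fin 2) A →ₗ[ℂ] Matrix (Fin 2) (Fin 2) A where
  toFun := matMap δ
  map_add' m n := by ext i j; simp [matMap, Matrix.map_apply, Matrix.add_apply]
  map_smul' c m := by ext i j; simp [matMap, Matrix.map_apply, Matrix.smul_apply]

/-- The Chern character form `STR(p e^{(p∇p)²} p − p₀ e^{(p₀∇p₀)²} p₀)` is `d`-closed: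
its image under `d = dV` vanishes. -/
theorem chern_character_form_closed {A V : Type*} [Ring A] [Algebra ℂ A]
    [AddCommGroup V] [Module ℂ V]
    (STR : A →ₗ[ℂ] V) (dV : V →ₗ[ℂ] V)
    (ε : A →ₐ[ℂ] A) (hε2 : ∀ a, ε (ε a) = a)
    (δ : A →ₗ[ℂ] A)
    (hLeibniz : ∀ a b, δ (a * b) = δ a * b + ε a * δ b)
    (hδodd : ∀ a, ε (δ a) = -δ (ε a))
    (hflat : ∀ a, δ (δ a) = 0)
    -- `STR` is a graded trace: it kills graded commutators
    (htrace_comm : ∀ a b, (ε a = a ∨ ε b = b) → STR (a * b) = STR (b * a))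
    (htrace_anticomm : ∀ a b, ε a = -a → ε b = -b → STR (a * b) = -STR (b * a))
    -- `STR ∘ [∇, ·] = d ∘ STR`
    (hSTRδ : ∀ a, STR (δ a) = dV (STR a))
    (p p₀ : Matrix (Fin 2) (Fin 2) A)
    (hp : p * p = p)
    (hp₀ : p₀ = !![0, 0; 0, 1])
    (hp_even : ∀ i j, ε (p i j) = p i j)
    (N : ℕ)
    (hRnil : (p * matMap δ p * matMap δ p * p) ^ N = 0)
    (hR₀nil : (p₀ * matMap δ p₀ * matMap δ p₀ * p₀) ^ N = 0) :
    dV (STR ((p * expoN N (p * matMap δ p * matMap δ p * p) * p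
            - p₀ * expoN N (p₀ * matMap δ p₀ * matMap δ p₀ * p₀) * p₀) 0 0)
      + STR ((p * expoN N (p * matMap δ p * matMap δ p * p) * p
            - p₀ * expoN N (p₀ * matMap δ p₀ * matMap δ p₀ * p₀) * p₀) 1 1)) = 0 := by
  subst hp₀
  set ω : Matrix (Fin 2) (Fin 2) A := matMap δ p with hωdef
  set R : Matrix (Fin 2) (Fin 2) A := p * ω * ω * p with hRdef
  set p₀ : Matrix (Fin 2) (Fin 2) A := !![0, 0; 0, 1] with hp₀def
  -- scalar basics
  have hδone : δ (1 : A) = 0 := by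
    have h := hLeibniz 1 1
    rw [one_mul, mul_one, map_one ε, one_mul] at h
    exact right_eq_add.mp h
  -- matrix-level derivation basics
  have hδp : delta2 δ p = ω := rfl
  have hLeib2 : ∀ m n : Matrix (Fin 2) (Fin 2) A,
      delta2 δ (m * n) = delta2 δ m * n + ε.mapMatrix m * delta2 δ n := by
    intro m n
    ext i j
    simp only [delta2, matMap, LinearMap.coe_mk, AddHom.coe_mk, Matrix.map_apply,
      Matrix.add_apply, Matrix.mul_apply, AlgHom.mapMatrix_apply, map_sum]
    rw [← Finset.sum_add_distrib]
    exact Finset.sum_congr rfl fun k _ => hLeibniz _ _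
  have hε2p : ε.mapMatrix p = p := by
    ext i j; simp [AlgHom.mapMatrix_apply, hp_even]
  have hε2ω : ε.mapMatrix ω = -ω := by
    ext i j
    simp [AlgHom.mapMatrix_apply, hωdef, matMap, Matrix.map_apply, hδodd, hp_even]
  have hδω : delta2 δ ω = 0 := by
    ext i j
    simp [delta2, hωdef, matMap, Matrix.map_apply, hflat]
  have hδ1 : delta2 δ (1 : Matrix (Fin 2) (Fin 2) A) = 0 := by
    ext i j
    simp [delta2, matMap, Matrix.map_apply, Matrix.one_apply, apply_ite δ, hδone]
  -- idempotent calculus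
  have hωsplit : ω = ω * p + p * ω := by
    have h := hLeib2 p p
    rw [hp, hδp, hε2p] at h
    exact h
  have hpωp : p * ω * p = 0 := by
    have h : p * ω * p = p * ω * p + p * ω * p := by
      conv_lhs => rw [hωsplit]
      rw [mul_add, add_mul]
      congr 1
      · rw [show p * (ω * p) * p = p * ω * (p * p) by noncomm_ring, hp]
      · rw [show p * (p * ω) * p = (p * p) * ω * p by noncomm_ring, hp]
    exact (right_eq_add.mp h)
  have hpR : p * R = R := by
    rw [hRdef, show p * (p * ω * ω * p) = (p * p) * ω * ω * p by noncomm_ring, hp]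
  have hRp : R * p = R := by
    rw [hRdef, show (p * ω * ω * p) * p = p * ω * ω * (p * p) by noncomm_ring, hp]
  have hcomm : ∀ k : ℕ, p * R ^ k = R ^ k * p := by
    intro k
    exact (Commute.pow_right (show Commute p R by rw [Commute, SemiconjBy, hpR, hRp]) k).eq
  have hF1 : ∀ k : ℕ, p * R ^ k * p = p * R ^ k := by
    intro k
    rw [hcomm, mul_assoc, hp, ← hcomm]
  have hF1' : ∀ k : ℕ, p * R ^ k * p = R ^ k * p := by
    intro k
    rw [hcomm, mul_assoc, hp]
  -- p ω³ p = 0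
  have hpWp : p * (ω * ω * ω) * p = 0 := by
    have e : p * (ω * ω * ω) * p = p * ω * (ω * p + p * ω) * ω * p := by
      rw [← hωsplit]; noncomm_ring
    rw [e, mul_add, add_mul, add_mul]
    have e1 : p * ω * (ω * p) * ω * p = (p * ω * ω) * (p * ω * p) := by noncomm_ring
    have e2 : p * ω * (p * ω) * ω * p = (p * ω * p) * (ω * ω * p) := by noncomm_ring
    rw [e1, e2, hpωp, mul_zero, zero_mul, add_zero]
  -- p ω³ R^m p = 0
  have hG : ∀ m : ℕ, p * (ω * ω * ω) * R ^ m * p = 0 := by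
    intro m
    induction m with
    | zero =>
      rw [pow_zero, mul_one, hpWp]
    | succ m ih =>
      have e1 : p * (ω * ω * ω) * R ^ (m + 1) * p
          = p * (ω * ω * ω) * R ^ m * (R * p) := by
        rw [pow_succ]; noncomm_ring
      rw [e1, hRp]
      have e2 : p * (ω * ω * ω) * R ^ m * R
          = (p * (ω * ω * ω) * R ^ m * p) * (ω * ω * p) := by
        rw [hRdef]; noncomm_ring
      rw [e2, ih, zero_mul]
  -- parity of powers of curvature
  have hε2R : ε.mapMatrix R = R := by
    rw [hRdef]
    simp only [map_mul, hε2p, hε2ω]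
    noncomm_ring
  have hε2Rk : ∀ k : ℕ, ε.mapMatrix (R ^ k) = R ^ k := by
    intro k; rw [map_pow, hε2R]
  -- the matrix supertrace and its cyclicity
  have hScyc : ∀ m n : Matrix (Fin 2) (Fin 2) A, ε.mapMatrix m = m →
      STR2 STR (m * n) = STR2 STR (n * m) := by
    intro m n hev
    have he : ∀ i j, ε (m i j) = m i j := by
      intro i j
      have := congrArg (fun M : Matrix (Fin 2) (Fin 2) A => M i j) hev
      simpa [AlgHom.mapMatrix_apply] using this
    have key : ∀ i k : Fin 2, STR (m i k * n k i) = STR (n k i * m i k) :=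
      fun i k => htrace_comm _ _ (Or.inl (he i k))
    simp only [STR2, LinearMap.coe_mk, AddHom.coe_mk, Matrix.mul_apply,
      Fin.sum_univ_two, map_add, key]
    abel
  have hSδ : ∀ m : Matrix (Fin 2) (Fin 2) A,
      STR2 STR (delta2 δ m) = dV (STR2 STR m) := by
    intro m
    simp [STR2, delta2, matMap, Matrix.map_apply, hSTRδ, map_add]
  -- boundary-term traces vanish
  have Z1 : ∀ k : ℕ, STR2 STR (p * (R ^ k * (p * ω))) = 0 := by
    intro k
    rw [hScyc p (R ^ k * (p * ω)) hε2p]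
    have e : (R ^ k * (p * ω)) * p = R ^ k * (p * ω * p) := by noncomm_ring
    rw [e, hpωp, mul_zero, map_zero]
  have ZA : ∀ k : ℕ, STR2 STR (ω * (R ^ k * p)) = 0 := by
    intro k
    have hev : ε.mapMatrix (R ^ k * p) = R ^ k * p := by rw [map_mul, hε2Rk, hε2p]
    rw [← hScyc (R ^ k * p) ω hev]
    have e : p * (R ^ k * (p * ω)) = (p * R ^ k * p) * ω := by noncomm_ring
    rw [hF1'] at e
    rw [show R ^ k * p * ω = (R ^ k * p) * ω from rfl, ← e, Z1]
  have ZB : ∀ k : ℕ, STR2 STR (p * (R ^ k * ω)) = 0 := by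
    intro k
    have e : p * (R ^ k * (p * ω)) = (p * R ^ k * p) * ω := by noncomm_ring
    rw [hF1] at e
    have e2 : p * (R ^ k * ω) = (p * R ^ k) * ω := by noncomm_ring
    rw [e2, ← e, Z1]
  -- curvature term is zero at the matrix level
  have hδR : delta2 δ R = (ω * ω * ω) * p + p * (ω * ω * ω) := by
    rw [hRdef, hLeib2 (p * ω * ω) p, hLeib2 (p * ω) ω, hLeib2 p ω, hδp, hδω]
    simp only [map_mul, hε2p, hε2ω]
    noncomm_ring
  have Z5 : ∀ k : ℕ, p * delta2 δ (R ^ k) * p = 0 := by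
    intro k
    induction k with
    | zero => rw [pow_zero, hδ1, mul_zero, zero_mul]
    | succ k ih =>
      rw [pow_succ', hLeib2 R (R ^ k), hε2R, mul_add, add_mul, hδR]
      have e1 : p * (((ω * ω * ω) * p + p * (ω * ω * ω)) * R ^ k) * p
          = (p * (ω * ω * ω) * p) * (R ^ k * p) + (p * p) * ((ω * ω * ω) * R ^ k * p) := by
        noncomm_ring
      have e2 : (p * p) * ((ω * ω * ω) * R ^ k * p) = p * (ω * ω * ω) * R ^ k * p := by
        rw [hp]; noncomm_ring
      have e3 : p * (R * delta2 δ (R ^ k)) * p = (p * R) * (delta2 δ (R ^ k) * p) := by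
        noncomm_ring
      have e4 : R * (delta2 δ (R ^ k) * p) = (p * ω * ω) * (p * delta2 δ (R ^ k) * p) := by
        rw [hRdef]; noncomm_ring
      rw [e1, e2, hpWp, zero_mul, zero_add, hG, zero_add, e3, hpR, e4, ih, mul_zero]
  -- the p₀ part has vanishing derivative
  have hδp₀ : matMap δ p₀ = 0 := by
    ext i j
    fin_cases i <;> fin_cases j <;>
      simp [hp₀def, matMap, Matrix.map_apply, hδone]
  have hδ0pow : ∀ k : ℕ, delta2 δ ((0 : Matrix (Fin 2) (Fin 2) A) ^ k) = 0 := by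
    intro k
    cases k with
    | zero => rw [pow_zero, hδ1]
    | succ k => rw [zero_pow (Nat.succ_ne_zero k), map_zero]
  have hδE₀ : delta2 δ (expoN N (0 : Matrix (Fin 2) (Fin 2) A)) = 0 := by
    simp [expoN, map_sum, map_smul, hδ0pow]
  have hR₀ : p₀ * matMap δ p₀ * matMap δ p₀ * p₀ = 0 := by
    rw [hδp₀]; simp
  have hD0 : delta2 δ (p₀ * expoN N (p₀ * matMap δ p₀ * matMap δ p₀ * p₀) * p₀) = 0 := by
    rw [hR₀, mul_assoc, hLeib2 p₀ _, hLeib2 _ p₀, hδE₀,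
      show delta2 δ p₀ = matMap δ p₀ from rfl, hδp₀]
    simp
  -- main computation
  set E : Matrix (Fin 2) (Fin 2) A := expoN N R with hEdef
  have hε2E : ε.mapMatrix E = E := by
    simp [hEdef, expoN, map_sum, map_smul, hε2Rk]
  have hDpEp : delta2 δ (p * E * p)
      = ω * (E * p) + (p * (delta2 δ E * p) + p * (ε.mapMatrix E * ω)) := by
    rw [mul_assoc, hLeib2 p (E * p), hLeib2 E p, hδp, hε2p, mul_add]
  have hT1 : STR2 STR (ω * (E * p)) = 0 := by
    have e : ω * (E * p) = ∑ k ∈ Finset.range N,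
        ((Nat.factorial k : ℂ)⁻¹ • (ω * (R ^ k * p))) := by
      simp [hEdef, expoN, Finset.sum_mul, Finset.mul_sum, smul_mul_assoc, mul_smul_comm]
    rw [e, map_sum]
    simp [map_smul, ZA]
  have hT3 : STR2 STR (p * (ε.mapMatrix E * ω)) = 0 := by
    rw [hε2E]
    have e : p * (E * ω) = ∑ k ∈ Finset.range N,
        ((Nat.factorial k : ℂ)⁻¹ • (p * (R ^ k * ω))) := by
      simp [hEdef, expoN, Finset.sum_mul, Finset.mul_sum, smul_mul_assoc, mul_smul_comm]
    rw [e, map_sum]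
    simp [map_smul, ZB]
  have hT2 : p * (delta2 δ E * p) = 0 := by
    have e : p * (delta2 δ E * p) = ∑ k ∈ Finset.range N,
        ((Nat.factorial k : ℂ)⁻¹ • (p * delta2 δ (R ^ k) * p)) := by
      simp [hEdef, expoN, map_sum, map_smul, Finset.sum_mul, Finset.mul_sum,
        smul_mul_assoc, mul_smul_comm, mul_assoc]
    rw [e]
    simp [Z5]
  -- assemble
  have goal_eq : STR ((p * E * p - p₀ * expoN N (p₀ * matMap δ p₀ * matMap δ p₀ * p₀) * p₀) 0 0)
      + STR ((p * E * p - p₀ * expoN N (p₀ * matMap δ p₀ * matMap δ p₀ * p₀) * p₀) 1 1)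
      = STR2 STR (p * E * p - p₀ * expoN N (p₀ * matMap δ p₀ * matMap δ p₀ * p₀) * p₀) := rfl
  rw [goal_eq, ← hSδ, map_sub, hD0, sub_zero, hDpEp, map_add, map_add, hT1, hT3, hT2,
    map_zero, add_zero, zero_add]
end
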